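/- For every natural number k, every ℓ with 0 ≤ ℓ ≤ k, and all positive real numbers r_0, …, r_{k+1} with r_ℓ ≠ r_{ℓ+1}, one has [ Ĩ_k(r_0, …, r̂_ℓ, …, r_{k+1}) − Ĩ_k(r_0, …, r̂_{ℓ+1}, …, r_{k+1}) ] / (r_{ℓ+1} − r_ℓ) = − Ĩ_{k+1}(r_0, …, r_{k+1}). -/

import Mathlib

open MeasureTheory

noncomputable section

/-- The simplex `Δ_k = {s ∈ ℝ^k : 0 ≤ s_k ≤ … ≤ s_1 ≤ 1}`, with zero-based
coordinates: `s i` is `s_{i+1}`. -/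
def simplexSet (k : ℕ) : Set (Fin k → ℝ) :=
  {s | (∀ i : Fin k, 0 ≤ s i ∧ s i ≤ 1) ∧ ∀ i j : Fin k, i ≤ j → s j ≤ s i}

/-- Extension of `s ∈ Δ_k` by the conventions `s_0 := 1` and `s_j := 0` for `j ≥ k+1`. -/
def sext (k : ℕ) (s : Fin k → ℝ) (j : ℕ) : ℝ :=
  if j = 0 then 1 else if h : j - 1 < k then s ⟨j - 1, h⟩ else 0

/-- The weight `Σ_{ℓ=0}^{k} (s_ℓ − s_{ℓ+1}) r_ℓ`. -/
def wsum (k : ℕ) (s : Fin k → ℝ) (r : ℕ → ℝ) : ℝ :=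
  ∑ ℓ ∈ Finset.range (k + 1), (sext k s ℓ - sext k s (ℓ + 1)) * r ℓ

/-- The universal spectral function
`I_{α,k}(r_0,…,r_k) = ∫_{Δ_k} (Σ_ℓ (s_ℓ−s_{ℓ+1}) r_ℓ)^{−α} ds`. -/
def Ifun (α : ℝ) (k : ℕ) (r : ℕ → ℝ) : ℝ :=
  ∫ s in simplexSet k, (wsum k s r) ^ (-α)

/-- `Ĩ_k(r_0,…,r_k) = ∫_{Δ_k} exp(−Σ_ℓ (s_ℓ−s_{ℓ+1}) r_ℓ) ds`. -/
def Itilde (k : ℕ) (r : ℕ → ℝ) : ℝ :=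
  ∫ s in simplexSet k, Real.exp (-(wsum k s r))

lemma insertNth_val {k ℓ : ℕ} (hℓ : ℓ ≤ k) (i : Fin (k+1)) (hi : (i:ℕ) = ℓ)
    (x : ℝ) (y : Fin k → ℝ) (j : Fin (k+1)) :
    Fin.insertNth (α := fun _ => ℝ) i x y j =
      if h : (j:ℕ) < ℓ then y ⟨(j:ℕ), by have := j.isLt; omega⟩
      else if h2 : (j:ℕ) = ℓ then x
      else y ⟨(j:ℕ) - 1, by have := j.isLt; omega⟩ := by
  rcases lt_trichotomy (j:ℕ) ℓ with h | h | h
  · rw [dif_pos h]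
    have e : Fin.succAbove i ⟨(j:ℕ), by omega⟩ = j := by
      rw [Fin.succAbove_of_castSucc_lt]
      · rfl
      · rw [Fin.lt_def]; simpa [hi] using h
    conv_lhs => rw [← e]
    rw [Fin.insertNth_apply_succAbove]
  · have : j = i := Fin.ext (by omega)
    subst this
    rw [Fin.insertNth_apply_same, dif_neg (by omega), dif_pos (by omega)]
  · rw [dif_neg (by omega), dif_neg (by omega)]
    have e : Fin.succAbove i ⟨(j:ℕ) - 1, by omega⟩ = j := by
      rw [Fin.succAbove_of_le_castSucc]
      · exact Fin.ext (by simp; omega)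
      · rw [Fin.le_def]; simp; omega
    conv_lhs => rw [← e]
    rw [Fin.insertNth_apply_succAbove]

lemma sext_insertNth {k ℓ : ℕ} (hℓ : ℓ ≤ k) (i : Fin (k+1)) (hi : (i:ℕ) = ℓ)
    (x : ℝ) (y : Fin k → ℝ) (m : ℕ) :
    sext (k+1) (Fin.insertNth (α := fun _ => ℝ) i x y) m =
      if m ≤ ℓ then sext k y m else if m = ℓ + 1 then x else sext k y (m-1) := by
  unfold sext
  rcases Nat.eq_zero_or_pos m with h0 | h0
  · subst h0; simp
  by_cases hmk : m - 1 < k + 1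
  · rw [if_neg (by omega), dif_pos hmk, insertNth_val hℓ i hi]
    simp only []
    split_ifs <;>
      first
        | rfl
        | omega
        | (exfalso; omega)
        | (apply congrArg; exact Fin.ext (by simp; omega))
  · rw [if_neg (by omega), dif_neg hmk]
    split_ifs <;> first | rfl | omega | (exfalso; omega) | (rw [dif_neg (by omega)])

lemma mem_simplexSet_iff_antitone {k : ℕ} {y : Fin k → ℝ} :
    y ∈ simplexSet k ↔ ∀ m m' : ℕ, m ≤ m' → sext k y m' ≤ sext k y m := by
  constructor
  · rintro ⟨hb, hm⟩ m m' h
    unfold sext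
    split_ifs with h1 h2 h3 h3 h4 <;>
      first
        | omega
        | exact le_refl _
        | exact (hb _).2
        | exact zero_le_one
        | exact (hb _).1
        | exact hm _ _ (by rw [Fin.le_def]; simp; omega)
  · intro h
    constructor
    · intro j
      have e : y j = sext k y ((j:ℕ)+1) := by
        unfold sext
        rw [if_neg (by omega), dif_pos (by simpa using j.isLt)]
        exact congrArg y (Fin.ext (by simp)).symm
      constructor
      · have := h ((j:ℕ)+1) (k+1) (by have := j.isLt; omega)
        rw [← e] at this
        simpa [sext, Nat.lt_irrefl] using this
      · have := h 0 ((j:ℕ)+1) (by omega)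
        rw [← e] at this
        simpa [sext] using this
    · intro a b hab
      have ea : y a = sext k y ((a:ℕ)+1) := by
        unfold sext
        rw [if_neg (by omega), dif_pos (by simpa using a.isLt)]
        exact congrArg y (Fin.ext (by simp)).symm
      have eb : y b = sext k y ((b:ℕ)+1) := by
        unfold sext
        rw [if_neg (by omega), dif_pos (by simpa using b.isLt)]
        exact congrArg y (Fin.ext (by simp)).symm
      rw [ea, eb]
      exact h _ _ (by rw [Fin.le_def] at hab; omega)

lemma insertNth_mem_simplexSet_iff {k ℓ : ℕ} (hℓ : ℓ ≤ k) (i : Fin (k+1)) (hi : (i:ℕ) = ℓ)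
    (x : ℝ) (y : Fin k → ℝ) :
    Fin.insertNth (α := fun _ => ℝ) i x y ∈ simplexSet (k+1) ↔
      y ∈ simplexSet k ∧ x ∈ Set.Icc (sext k y (ℓ+1)) (sext k y ℓ) := by
  rw [mem_simplexSet_iff_antitone, mem_simplexSet_iff_antitone]
  simp only [sext_insertNth hℓ i hi]
  constructor
  · intro h
    refine ⟨fun m m' hmm' => ?_, ?_, ?_⟩
    · have key : ∀ m : ℕ,
          (if (if m ≤ ℓ then m else m + 1) ≤ ℓ then sext k y (if m ≤ ℓ then m else m + 1)
           else if (if m ≤ ℓ then m else m + 1) = ℓ + 1 then x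
           else sext k y ((if m ≤ ℓ then m else m + 1) - 1)) = sext k y m := by
        intro m
        by_cases hm : m ≤ ℓ
        · simp [hm]
        · simp only [if_neg hm]
          rw [if_neg (by omega), if_neg (by omega), Nat.add_sub_cancel]
      have := h (if m ≤ ℓ then m else m + 1) (if m' ≤ ℓ then m' else m' + 1)
        (by split_ifs <;> omega)
      rwa [key, key] at this
    · have := h (ℓ+1) (ℓ+2) (by omega)
      simpa [Nat.add_sub_cancel, show ¬ (ℓ+1 ≤ ℓ) by omega, show ¬ (ℓ+2 ≤ ℓ) by omega,
        show ¬ (ℓ+2 = ℓ+1) by omega] using this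
    · have := h ℓ (ℓ+1) (by omega)
      simpa [show ¬ (ℓ+1 ≤ ℓ) by omega] using this
  · rintro ⟨hy, hx1, hx2⟩ m m' hmm'
    split_ifs with h1 h2 h3 h4 h5 h6 h7 <;>
      first
        | omega
        | exact hy _ _ (by omega)
        | exact le_rfl
        | exact le_trans hx2 (hy _ _ (by omega))
        | exact le_trans (hy _ _ (by omega)) hx1

lemma sum_split_shift (F G : ℕ → ℝ) (n ℓ : ℕ) (hℓ : ℓ ≤ n)
    (h1 : ∀ m, m < ℓ → F m = G m) (h2 : ∀ m, ℓ < m → m ≤ n → F (m + 1) = G m) :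
    ∑ m ∈ Finset.range (n + 2), F m
      = ∑ m ∈ Finset.range (n + 1), G m + (F ℓ + F (ℓ + 1) - G ℓ) := by
  have eF : ∑ m ∈ Finset.range (n + 2), F m
      = ∑ m ∈ Finset.Ico 0 ℓ, F m + (F ℓ + F (ℓ + 1)) + ∑ m ∈ Finset.Ico (ℓ + 2) (n + 2), F m := by
    rw [Finset.range_eq_Ico, ← Finset.sum_Ico_consecutive _ (Nat.zero_le (ℓ + 2)) (by omega),
      ← Finset.sum_Ico_consecutive _ (Nat.zero_le ℓ) (by omega : ℓ ≤ ℓ + 2)]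
    congr 1
    congr 1
    rw [Finset.sum_Ico_succ_top (by omega), Finset.sum_Ico_succ_top (by omega),
      Finset.Ico_self, Finset.sum_empty, zero_add]
  have eG : ∑ m ∈ Finset.range (n + 1), G m
      = ∑ m ∈ Finset.Ico 0 ℓ, G m + G ℓ + ∑ m ∈ Finset.Ico (ℓ + 1) (n + 1), G m := by
    rw [Finset.range_eq_Ico, ← Finset.sum_Ico_consecutive _ (Nat.zero_le (ℓ + 1)) (by omega),
      ← Finset.sum_Ico_consecutive _ (Nat.zero_le ℓ) (by omega : ℓ ≤ ℓ + 1)]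
    congr 1
    congr 1
    rw [Finset.sum_Ico_succ_top (by omega), Finset.Ico_self, Finset.sum_empty, zero_add]
  have e1 : ∑ m ∈ Finset.Ico 0 ℓ, F m = ∑ m ∈ Finset.Ico 0 ℓ, G m :=
    Finset.sum_congr rfl fun m hm => h1 m (by simpa using (Finset.mem_Ico.mp hm).2)
  have e3 : ∑ m ∈ Finset.Ico (ℓ + 2) (n + 2), F m = ∑ m ∈ Finset.Ico (ℓ + 1) (n + 1), G m := by
    rw [Finset.sum_Ico_eq_sum_range, Finset.sum_Ico_eq_sum_range,
      (by omega : n + 2 - (ℓ + 2) = n + 1 - (ℓ + 1))]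
    refine Finset.sum_congr rfl fun m hm => ?_
    have hm' := Finset.mem_range.mp hm
    rw [(by omega : ℓ + 2 + m = (ℓ + 1 + m) + 1)]
    exact h2 (ℓ + 1 + m) (by omega) (by omega)
  rw [eF, eG, e1, e3]; ring

lemma wsum_hat (k ℓ : ℕ) (hℓ : ℓ ≤ k) (y : Fin k → ℝ) (r : ℕ → ℝ) :
    wsum k y (fun m => if m < ℓ + 1 then r m else r (m + 1))
      = wsum k y (fun m => if m < ℓ then r m else r (m + 1))
        + (sext k y ℓ - sext k y (ℓ + 1)) * (r ℓ - r (ℓ + 1)) := by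
  unfold wsum
  have : ∀ m ∈ Finset.range (k + 1),
      (sext k y m - sext k y (m + 1)) * (if m < ℓ + 1 then r m else r (m + 1))
        = (sext k y m - sext k y (m + 1)) * (if m < ℓ then r m else r (m + 1))
          + (if m = ℓ then (sext k y ℓ - sext k y (ℓ + 1)) * (r ℓ - r (ℓ + 1)) else 0) := by
    intro m _
    rcases lt_trichotomy m ℓ with h | h | h
    · rw [if_pos (by omega), if_pos h, if_neg (by omega), add_zero]
    · subst h
      rw [if_pos (by omega), if_neg (by omega), if_pos rfl]; ring
    · rw [if_neg (by omega), if_neg (by omega), if_neg (by omega), add_zero]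
  rw [Finset.sum_congr rfl this, Finset.sum_add_distrib,
    Finset.sum_ite_eq' (Finset.range (k + 1)) ℓ
      (fun _ => (sext k y ℓ - sext k y (ℓ + 1)) * (r ℓ - r (ℓ + 1))),
    if_pos (Finset.mem_range.mpr (by omega))]

lemma wsum_insertNth (k ℓ : ℕ) (hℓ : ℓ ≤ k) (i : Fin (k + 1)) (hi : (i : ℕ) = ℓ)
    (x : ℝ) (y : Fin k → ℝ) (r : ℕ → ℝ) :
    wsum (k + 1) (Fin.insertNth (α := fun _ => ℝ) i x y) r
      = wsum k y (fun m => if m < ℓ then r m else r (m + 1))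
        + (sext k y ℓ - x) * (r ℓ - r (ℓ + 1)) := by
  unfold wsum
  have key := sum_split_shift
    (fun m => (sext (k + 1) (Fin.insertNth (α := fun _ => ℝ) i x y) m
      - sext (k + 1) (Fin.insertNth (α := fun _ => ℝ) i x y) (m + 1)) * r m)
    (fun m => (sext k y m - sext k y (m + 1)) * (if m < ℓ then r m else r (m + 1)))
    k ℓ hℓ ?_ ?_
  · rw [key]
    congr 1
    simp only [sext_insertNth hℓ i hi, Nat.add_sub_cancel]
    split_ifs <;> first | ring1 | (exfalso; omega)
  · intro m hm
    simp only [sext_insertNth hℓ i hi, Nat.add_sub_cancel]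
    split_ifs <;> first | ring1 | (exfalso; omega)
  · intro m hm1 hm2
    simp only [sext_insertNth hℓ i hi, Nat.add_sub_cancel]
    split_ifs <;> first | ring1 | (exfalso; omega)

lemma isClosed_simplexSet (k : ℕ) : IsClosed (simplexSet k) := by
  have h1 : IsClosed {s : Fin k → ℝ | ∀ i, 0 ≤ s i ∧ s i ≤ 1} := by
    have e : {s : Fin k → ℝ | ∀ i, 0 ≤ s i ∧ s i ≤ 1}
        = ⋂ i, ({s : Fin k → ℝ | 0 ≤ s i} ∩ {s | s i ≤ 1}) := by
      ext s; simp [Set.mem_iInter, forall_and]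
    rw [e]
    exact isClosed_iInter fun i =>
      ((isClosed_le continuous_const (continuous_apply i)).inter
        (isClosed_le (continuous_apply i) continuous_const))
  have h2 : IsClosed {s : Fin k → ℝ | ∀ i j : Fin k, i ≤ j → s j ≤ s i} := by
    have e : {s : Fin k → ℝ | ∀ i j : Fin k, i ≤ j → s j ≤ s i}
        = ⋂ (i) (j) (_ : i ≤ j), {s : Fin k → ℝ | s j ≤ s i} := by
      ext s; simp [Set.mem_iInter]
    rw [e]
    exact isClosed_iInter fun i => isClosed_iInter fun j => isClosed_iInter fun _ =>
      isClosed_le (continuous_apply j) (continuous_apply i)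
  exact h1.inter h2

lemma isCompact_simplexSet (k : ℕ) : IsCompact (simplexSet k) := by
  refine IsCompact.of_isClosed_subset (isCompact_univ_pi fun _ : Fin k => isCompact_Icc (a := (0:ℝ)) (b := 1))
    (isClosed_simplexSet k) ?_
  intro s hs
  rw [Set.mem_univ_pi]
  exact fun i => ⟨(hs.1 i).1, (hs.1 i).2⟩

lemma measurableSet_simplexSet (k : ℕ) : MeasurableSet (simplexSet k) :=
  (isClosed_simplexSet k).measurableSet

lemma continuous_sext (k j : ℕ) : Continuous fun s : Fin k → ℝ => sext k s j := by
  unfold sext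
  rcases eq_or_ne j 0 with h | h
  · simp only [if_pos h]; exact continuous_const
  · simp only [if_neg h]
    by_cases hk : j - 1 < k
    · simp only [dif_pos hk]; exact continuous_apply _
    · simp only [dif_neg hk]; exact continuous_const

lemma continuous_wsum (k : ℕ) (r : ℕ → ℝ) : Continuous fun s : Fin k → ℝ => wsum k s r := by
  unfold wsum
  exact continuous_finset_sum _ fun m _ =>
    ((continuous_sext k m).sub (continuous_sext k (m + 1))).mul continuous_const

lemma integrableOn_exp_wsum (k : ℕ) (r : ℕ → ℝ) :
    IntegrableOn (fun s => Real.exp (-(wsum k s r))) (simplexSet k) :=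
  (((continuous_wsum k r).neg.rexp).continuousOn).integrableOn_compact (isCompact_simplexSet k)

lemma exp_integral_aux (A B C δ : ℝ) (hδ : δ ≠ 0) (hBA : B ≤ A) :
    ∫ x in Set.Icc B A, Real.exp (-(C + (A - x) * δ))
      = (Real.exp (-C) - Real.exp (-(C + (A - B) * δ))) / δ := by
  rw [MeasureTheory.integral_Icc_eq_integral_Ioc, ← intervalIntegral.integral_of_le hBA]
  have hderiv : ∀ x ∈ Set.uIcc B A,
      HasDerivAt (fun x => Real.exp (-(C + (A - x) * δ)) / δ)
        (Real.exp (-(C + (A - x) * δ))) x := by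
    intro x _
    have hg : HasDerivAt (fun x : ℝ => -(C + (A - x) * δ)) δ x := by
      have h1 := (((hasDerivAt_id x).const_sub A).mul_const δ).const_add C
      have h2 := h1.neg
      exact h2.congr_deriv (by ring)
    have h3 := (hg.exp).div_const δ
    exact h3.congr_deriv (mul_div_cancel_right₀ _ hδ)
  rw [intervalIntegral.integral_eq_sub_of_hasDerivAt hderiv
    ((Real.continuous_exp.comp (by continuity)).intervalIntegrable B A)]
  · simp only [sub_self, zero_mul, add_zero]
    ring

/-- for `0 ≤ ℓ ≤ k`, positive `r_0,…,r_{k+1}` with `r_ℓ ≠ r_{ℓ+1}`,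
`[Ĩ_k(…,r̂_ℓ,…) − Ĩ_k(…,r̂_{ℓ+1},…)]/(r_{ℓ+1}−r_ℓ) = −Ĩ_{k+1}(r_0,…,r_{k+1})`. -/
theorem finite_difference_Itilde (k ℓ : ℕ) (hℓ : ℓ ≤ k) (r : ℕ → ℝ)
    (hr : ∀ j ≤ k + 1, 0 < r j) (hne : r ℓ ≠ r (ℓ + 1)) :
    (Itilde k (fun m => if m < ℓ then r m else r (m + 1))
        - Itilde k (fun m => if m < ℓ + 1 then r m else r (m + 1))) / (r (ℓ + 1) - r ℓ)
      = -Itilde (k + 1) r := by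
  set rL : ℕ → ℝ := fun m => if m < ℓ then r m else r (m + 1) with hrL
  set rK : ℕ → ℝ := fun m => if m < ℓ + 1 then r m else r (m + 1) with hrK
  set δ : ℝ := r ℓ - r (ℓ + 1) with hδdef
  have hδ : δ ≠ 0 := sub_ne_zero.mpr hne
  set i : Fin (k + 1) := ⟨ℓ, by omega⟩ with hidef
  have hi : (i : ℕ) = ℓ := rfl
  -- the function on the big simplex
  set f : (Fin (k + 1) → ℝ) → ℝ := fun s => Real.exp (-(wsum (k + 1) s r)) with hf
  set F : (Fin (k + 1) → ℝ) → ℝ := Set.indicator (simplexSet (k + 1)) f with hF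
  have hFint : Integrable F :=
    (integrable_indicator_iff (measurableSet_simplexSet (k + 1))).mpr
      (integrableOn_exp_wsum (k + 1) r)
  -- transfer to the product space
  have hmp := MeasureTheory.volume_preserving_piFinSuccAbove (fun _ : Fin (k + 1) => ℝ) i
  set e := MeasurableEquiv.piFinSuccAbove (fun _ : Fin (k + 1) => ℝ) i with he
  have hGint : Integrable (fun p : ℝ × (Fin k → ℝ) => F (e.symm p)) :=
    (MeasurePreserving.symm e hmp).integrable_comp_emb e.symm.measurableEmbedding |>.mpr hFint
  have step1 : Itilde (k + 1) r = ∫ p : ℝ × (Fin k → ℝ), F (e.symm p) := by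
    rw [Itilde, ← MeasureTheory.integral_indicator (measurableSet_simplexSet (k + 1)), ← hF]
    exact ((MeasurePreserving.symm e hmp).integral_comp' F).symm
  have hsymm : ∀ (x : ℝ) (y : Fin k → ℝ),
      e.symm (x, y) = Fin.insertNth (α := fun _ => ℝ) i x y := by
    intro x y
    simp [he, MeasurableEquiv.piFinSuccAbove, Fin.insertNthEquiv]
  -- pointwise description
  have hpt : ∀ (x : ℝ) (y : Fin k → ℝ),
      F (e.symm (x, y)) = Set.indicator (simplexSet k)
        (fun y' => Set.indicator (Set.Icc (sext k y' (ℓ + 1)) (sext k y' ℓ))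
          (fun x' => Real.exp (-(wsum k y' rL + (sext k y' ℓ - x') * δ))) x) y := by
    intro x y
    rw [hsymm]
    by_cases hy : y ∈ simplexSet k
    · rw [Set.indicator_of_mem hy]
      by_cases hx : x ∈ Set.Icc (sext k y (ℓ + 1)) (sext k y ℓ)
      · rw [Set.indicator_of_mem hx, hF,
          Set.indicator_of_mem ((insertNth_mem_simplexSet_iff hℓ i hi x y).mpr ⟨hy, hx⟩), hf]
        simp only [wsum_insertNth k ℓ hℓ i hi x y r]
        rfl
      · rw [Set.indicator_of_notMem hx, hF, Set.indicator_of_notMem]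
        intro hmem
        exact hx ((insertNth_mem_simplexSet_iff hℓ i hi x y).mp hmem).2
    · rw [Set.indicator_of_notMem hy, hF, Set.indicator_of_notMem]
      intro hmem
      exact hy ((insertNth_mem_simplexSet_iff hℓ i hi x y).mp hmem).1
  -- Fubini
  have step2 : ∫ p : ℝ × (Fin k → ℝ), F (e.symm p)
      = ∫ y : Fin k → ℝ, ∫ x : ℝ, F (e.symm (x, y)) := by
    have hGint' : Integrable (fun p : ℝ × (Fin k → ℝ) => F (e.symm p))
        (MeasureTheory.Measure.prod volume volume) := by
      rwa [← MeasureTheory.Measure.volume_eq_prod]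
    rw [MeasureTheory.Measure.volume_eq_prod, MeasureTheory.integral_prod _ hGint']
    exact MeasureTheory.integral_integral_swap hGint'
  -- inner integral
  have hBA : ∀ y ∈ simplexSet k, sext k y (ℓ + 1) ≤ sext k y ℓ := by
    intro y hy
    exact mem_simplexSet_iff_antitone.mp hy ℓ (ℓ + 1) (by omega)
  have inner : ∀ y : Fin k → ℝ, (∫ x : ℝ, F (e.symm (x, y)))
      = Set.indicator (simplexSet k)
        (fun y' => (Real.exp (-(wsum k y' rL)) - Real.exp (-(wsum k y' rK))) / δ) y := by
    intro y
    simp only [hpt]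
    by_cases hy : y ∈ simplexSet k
    · simp only [Set.indicator_of_mem hy]
      rw [MeasureTheory.integral_indicator measurableSet_Icc]
      rw [exp_integral_aux (sext k y ℓ) (sext k y (ℓ + 1)) (wsum k y rL) δ hδ (hBA y hy)]
      congr 2
      try rw [wsum_hat k ℓ hℓ y r]
      try ring
    · simp only [Set.indicator_of_notMem hy, MeasureTheory.integral_zero]
  -- outer integral
  have step3 : ∫ y : Fin k → ℝ, ∫ x : ℝ, F (e.symm (x, y))
      = (Itilde k rL - Itilde k rK) / δ := by
    simp only [inner]
    rw [MeasureTheory.integral_indicator (measurableSet_simplexSet k)]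
    rw [MeasureTheory.integral_div]
    congr 1
    rw [MeasureTheory.integral_sub (integrableOn_exp_wsum k rL) (integrableOn_exp_wsum k rK)]
    rfl
  have main : Itilde (k + 1) r = (Itilde k rL - Itilde k rK) / δ := by
    rw [step1, step2, step3]
  rw [main]
  have : r (ℓ + 1) - r ℓ = -δ := by rw [hδdef]; ring
  rw [this, div_neg]

end
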